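/- Let h, p, Φ be real numbers such that Φ = −3·h^3·exp(p) + ε·√(9·h^6·exp(2p) + 6·h^2) for some ε ∈ {−1, 1} (i.e. Φ is one of the two roots of the Hamiltonian constraint 3h^2 − 3·exp(p)·Φ·h^3 = Φ^2/2 solved for Φ). Then 2 − 2·h·exp(p)·Φ + 3·h^4·exp(2p) > 0. -/
import Mathlib

/-- Positivity of the denominator of the reduced Hubble evolution equation in
EdGB cosmology with exponential coupling: if `Φ` is one of the two roots of the
Hamiltonian constraint `3h² − 3·e^p·Φ·h³ = Φ²/2` solved for `Φ`, then
`2 − 2·h·e^p·Φ + 3·h⁴·e^{2p} > 0`. -/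
theorem stmt_0 (h p Φ ε : ℝ) (hε : ε = -1 ∨ ε = 1)
    (hΦ : Φ = -3 * h ^ 3 * Real.exp p
        + ε * Real.sqrt (9 * h ^ 6 * Real.exp (2 * p) + 6 * h ^ 2)) :
    2 - 2 * h * Real.exp p * Φ + 3 * h ^ 4 * Real.exp (2 * p) > 0 := by
  have hA : (0:ℝ) ≤ 9 * h ^ 6 * Real.exp (2 * p) + 6 * h ^ 2 := by positivity
  set s := Real.sqrt (9 * h ^ 6 * Real.exp (2 * p) + 6 * h ^ 2) with hsdef
  have hs2 : s ^ 2 = 9 * h ^ 6 * Real.exp (2 * p) + 6 * h ^ 2 := Real.sq_sqrt hA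
  have he : Real.exp (2 * p) = Real.exp p * Real.exp p := by
    rw [two_mul, Real.exp_add]
  have hep : 0 < Real.exp p := Real.exp_pos p
  set e := Real.exp p with hedef
  set B : ℝ := 2 + 9 * h ^ 4 * e ^ 2 with hB
  set T : ℝ := 2 * h * e * s with hT
  have hBpos : 0 < B := by positivity
  have hsq : T ^ 2 < B ^ 2 := by
    have : T ^ 2 = 4 * h ^ 2 * e ^ 2 * (9 * h ^ 6 * (e * e) + 6 * h ^ 2) := by
      rw [hT]; ring_nf; rw [hs2, he]; ring
    nlinarith [sq_nonneg (h ^ 2 * e), sq_nonneg (h ^ 4 * e ^ 2), sq_nonneg (h * e)]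
  have habs : |T| < B := by
    have h' : |T| ^ 2 < B ^ 2 := by rwa [sq_abs]
    exact lt_of_pow_lt_pow_left₀ 2 hBpos.le h'
  have h1 := neg_abs_le T
  have h2 := le_abs_self T
  rcases hε with rfl | rfl <;> subst hΦ <;> rw [he] <;>
    simp only [hB, hT] at habs h1 h2 <;> nlinarith [habs, h1, h2]
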